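/- arXiv:2401.16195 — 10 statements merged into one kernel-verified Lean document; each statement's English description precedes it below -/
import Mathlib

section
/- Let M be a finite monoid and s,t ∈ M such that t ≤_J s (i.e., t = x s y for some x,y ∈ M). If s ≤_R t (i.e., s = t y' for some y'), then s R t (i.e., also t ≤_R s). Similarly, if s ≤_L t, then s L t. -/
/-!
If `t = x * s * y` and `s = t * y'`, then `t = x * t * b` with `b = y' * y`, hence
`t = xⁿ * t * bⁿ` for every `n`. Finiteness gives `bⁱ = bʲ` with `i < j`, and then
`t * b^(j - i) = xⁱ * t * bʲ = t`. Peeling one factor `b = y' * y` off `b^(j - i)` exhibits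
`t` as `t * y' * (…) = s * (…)`. The statement for `≤_L` is the one for `≤_R` in `Mᵐᵒᵖ`.
-/

section Monoid

variable {M : Type*} [Monoid M]

lemma eq_pow_mul_mul_pow_of_eq_mul_mul {a b t : M} (h : t = a * t * b) (n : ℕ) :
    t = a ^ n * t * b ^ n := by
  induction n with
  | zero => simp
  | succ n ih =>
    calc t = a * (a ^ n * t * b ^ n) * b := by rw [← ih, ← h]
      _ = a ^ (n + 1) * t * b ^ (n + 1) := by
        rw [pow_succ' a, pow_succ b]; simp only [mul_assoc]

variable [Finite M]

lemma exists_mul_pow_eq_self_of_eq_mul_mul {a b t : M} (h : t = a * t * b) :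
    ∃ n, 0 < n ∧ t * b ^ n = t := by
  obtain ⟨i, j, hij, hb⟩ := Set.finite_univ.exists_lt_map_eq_of_forall_mem
    (f := fun n : ℕ ↦ b ^ n) fun _ ↦ Set.mem_univ _
  refine ⟨j - i, Nat.sub_pos_of_lt hij, ?_⟩
  calc t * b ^ (j - i) = a ^ i * t * (b ^ i * b ^ (j - i)) := by
        conv_lhs => rw [eq_pow_mul_mul_pow_of_eq_mul_mul h i]
        simp only [mul_assoc]
    _ = t := by
        rw [← pow_add, Nat.add_sub_cancel' hij.le, ← hb, ← eq_pow_mul_mul_pow_of_eq_mul_mul h i]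

lemma exists_eq_mul_right_of_eq_mul_mul {s t x y y' : M} (hJ : t = x * s * y)
    (hR : s = t * y') : ∃ z, t = s * z := by
  have hloop : t = x * t * (y' * y) := by
    conv_lhs => rw [hJ, hR]
    simp only [mul_assoc]
  obtain ⟨_ | m, hn, hpow⟩ := exists_mul_pow_eq_self_of_eq_mul_mul hloop
  · exact absurd hn (lt_irrefl 0)
  refine ⟨y * (y' * y) ^ m, ?_⟩
  calc t = t * (y' * y) ^ (m + 1) := hpow.symm
    _ = t * y' * (y * (y' * y) ^ m) := by rw [pow_succ']; simp only [mul_assoc]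
    _ = s * (y * (y' * y) ^ m) := by rw [← hR]

lemma exists_eq_mul_left_of_eq_mul_mul {s t x y x' : M} (hJ : t = x * s * y)
    (hL : s = x' * t) : ∃ z, t = z * s := by
  have : Finite Mᵐᵒᵖ := .of_equiv M MulOpposite.opEquiv
  obtain ⟨z, hz⟩ := exists_eq_mul_right_of_eq_mul_mul (M := Mᵐᵒᵖ)
    (x := .op y) (y := .op x) (y' := .op x')
    (congrArg MulOpposite.op hJ |>.trans (by simp only [MulOpposite.op_mul, mul_assoc]))
    (congrArg MulOpposite.op hL |>.trans (MulOpposite.op_mul _ _))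
  exact ⟨z.unop, congrArg MulOpposite.unop hz⟩

end Monoid

/-- In a finite monoid, if `t ≤_J s` then `s ≤_R t` implies `s R t`
(i.e. also `t ≤_R s`), and `s ≤_L t` implies `s L t` (i.e. also `t ≤_L s`). -/
theorem stmt_0 {M : Type*} [Monoid M] [Fintype M] (s t : M)
    (hJ : ∃ x y : M, t = x * s * y) :
    ((∃ y' : M, s = t * y') → (∃ y'' : M, t = s * y'')) ∧
    ((∃ x' : M, s = x' * t) → (∃ x'' : M, t = x'' * s)) := by
  obtain ⟨x, y, hxy⟩ := hJ
  exact ⟨fun ⟨_, hR⟩ ↦ exists_eq_mul_right_of_eq_mul_mul hxy hR,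
    fun ⟨_, hL⟩ ↦ exists_eq_mul_left_of_eq_mul_mul hxy hL⟩
end

section
/- Let M be a finite monoid and let F ⊆ M satisfy F·F = F (as sets). Then every m ∈ F can be written m = u f v with u, v ∈ F and f ∈ F idempotent; in particular F ⊆ F·E(F)·F, where E(F) is the set of idempotents of M lying in F. -/
open Pointwise

/-- In a finite monoid, every element has an idempotent positive power. -/
lemma exists_idem_pow {M : Type*} [Monoid M] [Fintype M] (a : M) :
    ∃ k : ℕ, 1 ≤ k ∧ IsIdempotentElem (a ^ k) := by
  obtain ⟨i, j, hij, h⟩ : ∃ i j : ℕ, i < j ∧ a ^ i = a ^ j := by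
    obtain ⟨i, j, hne, h⟩ := Finite.exists_ne_map_eq_of_infinite (fun n : ℕ => a ^ n)
    rcases lt_or_gt_of_ne hne with h' | h'
    · exact ⟨i, j, h', h⟩
    · exact ⟨j, i, h', h.symm⟩
  set d := j - i with hd
  have hd1 : 1 ≤ d := by omega
  have hji : j = i + d := by omega
  have key : ∀ n, i ≤ n → a ^ (n + d) = a ^ n := by
    intro n hn
    have e1 : a ^ (n + d) = a ^ (n - i) * a ^ (i + d) := by
      rw [← pow_add]; congr 1; omega
    have e2 : a ^ n = a ^ (n - i) * a ^ i := by
      rw [← pow_add]; congr 1; omega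
    rw [e1, e2, ← hji, ← h]
  have key2 : ∀ t n, i ≤ n → a ^ (n + t * d) = a ^ n := by
    intro t
    induction t with
    | zero => simp
    | succ t ih =>
      intro n hn
      have : n + (t + 1) * d = (n + t * d) + d := by ring
      rw [this, key _ (by omega), ih n hn]
  refine ⟨d * (i + 1), by nlinarith, ?_⟩
  unfold IsIdempotentElem
  rw [← pow_add]
  have : d * (i + 1) + d * (i + 1) = d * (i + 1) + (i + 1) * d := by ring
  rw [this]
  exact key2 (i + 1) _ (by nlinarith)

/-- In a finite monoid, if `F` is a nonempty subset with `F·F = F` (setwise),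
then `F ⊆ F · (E(M) ∩ F) · F`: every `m ∈ F` factors as `m = u f v` with
`u, v ∈ F` and `f ∈ F` idempotent. -/
theorem stmt_2 {M : Type*} [Monoid M] [Fintype M] (F : Set M)
    (hne : F.Nonempty) (hFF : F * F = F) :
    ∀ m ∈ F, ∃ u f v : M, u ∈ F ∧ f ∈ F ∧ IsIdempotentElem f ∧ v ∈ F ∧
      m = u * f * v := by
  intro m hm
  have hcl : ∀ a ∈ F, ∀ b ∈ F, a * b ∈ F := fun a ha b hb => hFF ▸ Set.mul_mem_mul ha hb
  -- a splitting function
  have hsplit : ∀ x : F, ∃ p : M × M, p.1 ∈ F ∧ p.2 ∈ F ∧ (x : M) = p.1 * p.2 := by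
    rintro ⟨x, hx⟩
    rw [← hFF] at hx
    obtain ⟨a, ha, b, hb, hab⟩ := hx
    exact ⟨(a, b), ha, hb, hab.symm⟩
  choose g hg1 hg2 hg3 using hsplit
  -- the sequence of right remainders
  obtain ⟨v, hv0, hv⟩ : ∃ v : ℕ → F, v 0 = ⟨m, hm⟩ ∧
      ∀ n, (v n : M) = (g (v n)).1 * (v (n + 1) : M) :=
    ⟨fun n => Nat.rec ⟨m, hm⟩ (fun _ x => ⟨(g x).2, hg2 x⟩) n, rfl, fun n => hg3 _⟩
  -- partial products
  obtain ⟨p, hp0, hps⟩ : ∃ p : ℕ → M, p 0 = 1 ∧ ∀ n, p (n + 1) = p n * (g (v n)).1 :=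
    ⟨fun n => Nat.rec 1 (fun k x => x * (g (v k)).1) n, rfl, fun n => rfl⟩
  have ha : ∀ n, (g (v n)).1 ∈ F := fun n => hg1 (v n)
  have hmp : ∀ n, m = p n * (v n : M) := by
    intro n
    induction n with
    | zero => simp [hp0, hv0]
    | succ n ih => rw [hps, mul_assoc, ← hv, ih]
  have hpF : ∀ n, p (n + 1) ∈ F := by
    intro n
    induction n with
    | zero => simpa [hps, hp0] using ha 0
    | succ n ih => rw [hps]; exact hcl _ ih _ (ha (n + 1))
  -- pigeonhole on shifted partial products
  obtain ⟨i, j, hij, hpij⟩ : ∃ i j : ℕ, i < j ∧ p (i + 1) = p (j + 1) := by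
    obtain ⟨i, j, hne', h⟩ := Finite.exists_ne_map_eq_of_infinite (fun n : ℕ => p (n + 1))
    rcases lt_or_gt_of_ne hne' with h' | h'
    · exact ⟨i, j, h', h⟩
    · exact ⟨j, i, h', h.symm⟩
  -- p (j+1) = p (i+1) * r with r ∈ F
  obtain ⟨r, hrF, hr⟩ : ∃ r ∈ F, p (j + 1) = p (i + 1) * r := by
    obtain ⟨k, hk⟩ : ∃ k, j = i + 1 + k := ⟨j - i - 1, by omega⟩
    subst hk
    clear hpij hij
    induction k with
    | zero => exact ⟨(g (v (i + 1))).1, ha _, hps _⟩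
    | succ k ih =>
      obtain ⟨r, hrF, hr⟩ := ih
      refine ⟨r * (g (v (i + 1 + k + 1))).1, hcl _ hrF _ (ha _), ?_⟩
      have : i + 1 + (k + 1) + 1 = (i + 1 + k + 1) + 1 := by omega
      rw [this, hps, hr, mul_assoc]
  have hfix : p (i + 1) = p (i + 1) * r := by rw [← hr, hpij]
  have hfixpow : ∀ t : ℕ, p (i + 1) = p (i + 1) * r ^ t := by
    intro t
    induction t with
    | zero => simp
    | succ t ih => rw [pow_succ, ← mul_assoc, ← ih]; exact hfix
  obtain ⟨k, hk1, hkid⟩ := exists_idem_pow r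
  have hrkF : r ^ k ∈ F := by
    obtain ⟨k', rfl⟩ : ∃ k', k = k' + 1 := ⟨k - 1, by omega⟩
    clear hk1 hkid
    induction k' with
    | zero => simpa using hrF
    | succ k' ih => rw [pow_succ]; exact hcl _ ih _ hrF
  refine ⟨p (i + 1), r ^ k, v (j + 1), hpF i, hrkF, hkid, (v (j + 1)).2, ?_⟩
  rw [← hfixpow, hpij, ← hmp]
end

section
/- Let M be a finite monoid. Define a relation ⪯ on M as the least preorder such that for every idempotent e ∈ M, every s in a fixed set P of 'pair partners' of e (i.e., (e,s) ∈ R for a fixed relation R ⊆ E(M)×M), and all x,y ∈ M, we have x e y ⪯ x e s e y. Suppose M satisfies: for every (e,s) ∈ R and every t ∈ M, (eset)^{ω+1} = (eset)^ω e t (eset)^ω. Then for all q, s ∈ M with q ⪯ s, we have s^{ω+1} = s^ω q s^ω. -/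
/-!
Call `q ⪯' s` when `(u s v)^{ω+1} = (u s v)^ω (u q v) (u s v)^ω` for every context `u, v`.
This relation is reflexive, so it suffices to show that it is preserved along a generating step
`x e y ⤳ x e s e y`. In context put `p = X e s e Y` with `X = u x`, `Y = y v`. Since
`p^k X = X (e s e Y X)^k`, the hypothesis applied to `t = Y X` gives `p^ω (X e Y) p^ω = p^{ω+1}`.
Applying the induction hypothesis in the context `p^ω _ p^ω` and collapsing the powers of
`p^{ω+1}` back to `p^ω` and `p^{ω+1}` yields `p^{ω+1} = p^ω (u q v) p^ω`.
-/

section IdempotentPower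

variable {M : Type*} [Monoid M] {n : ℕ} {a : M}

lemma pow_add_pow_add_of_isIdempotentElem_pow (ha : IsIdempotentElem (a ^ n)) (k : ℕ) :
    a ^ (n + n + k) = a ^ (n + k) := by
  rw [pow_add, pow_add, ha.eq, pow_add]

lemma pow_succ_pow_of_isIdempotentElem_pow (ha : IsIdempotentElem (a ^ n)) :
    (a ^ (n + 1)) ^ n = a ^ n := by
  rw [← pow_mul, mul_comm, pow_mul, ha.pow_succ_eq n]

lemma pow_succ_pow_succ_of_isIdempotentElem_pow (ha : IsIdempotentElem (a ^ n)) :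
    (a ^ (n + 1)) ^ (n + 1) = a ^ (n + 1) := by
  rw [pow_succ _ n, pow_succ_pow_of_isIdempotentElem_pow ha, ← pow_add, ← add_assoc,
    pow_add_pow_add_of_isIdempotentElem_pow ha]

lemma pow_mul_mul_pow_eq_pow_succ (hn : 0 < n) {x b d : M}
    (hidem : IsIdempotentElem ((x * b) ^ n))
    (hswap : (b * x) ^ (n + 1) = (b * x) ^ n * (d * x) * (b * x) ^ n) :
    (x * b) ^ n * (x * d) * (x * b) ^ n = (x * b) ^ (n + 1) := by
  obtain ⟨m, hm⟩ : ∃ m, n + n = n + 1 + m := ⟨n - 1, by omega⟩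
  have hpow : ∀ k, (x * b) ^ (k + 1) = x * (b * x) ^ k * b := fun k => by
    rw [pow_succ, ← mul_assoc, mul_pow_mul]
  have hright : (x * b) ^ n * (x * d) * (x * b) ^ (n + 1) = (x * b) ^ (n + 1 + 1) := by
    calc (x * b) ^ n * (x * d) * (x * b) ^ (n + 1)
        = x * ((b * x) ^ n * (d * x) * (b * x) ^ n) * b := by
          rw [hpow, ← mul_assoc _ x d, mul_pow_mul]; simp only [mul_assoc]
      _ = (x * b) ^ (n + 1 + 1) := by rw [← hswap, hpow]
  calc (x * b) ^ n * (x * d) * (x * b) ^ n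
      = (x * b) ^ n * (x * d) * (x * b) ^ (n + 1) * (x * b) ^ m := by
        rw [mul_assoc _ _ ((x * b) ^ m), ← pow_add, ← hm, pow_add, hidem.eq]
    _ = (x * b) ^ (n + n + 1) := by rw [hright, ← pow_add]; congr 1; omega
    _ = (x * b) ^ (n + 1) := pow_add_pow_add_of_isIdempotentElem_pow hidem 1

end IdempotentPower

section ContextOmegaEq

variable {M : Type*} [Monoid M] {n : ℕ}

def ContextOmegaEq (n : ℕ) (q s : M) : Prop :=
  ∀ u v : M, (u * s * v) ^ (n + 1) = (u * s * v) ^ n * (u * q * v) * (u * s * v) ^ n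

lemma contextOmegaEq_refl (hidem : ∀ a : M, IsIdempotentElem (a ^ n)) (q : M) :
    ContextOmegaEq n q q := fun u v => by
  rw [← pow_succ, ← pow_add, add_right_comm, pow_add_pow_add_of_isIdempotentElem_pow (hidem _)]

lemma ContextOmegaEq.mul_mul {q s : M} (h : ContextOmegaEq n q s) (u v : M) :
    ContextOmegaEq n (u * q * v) (u * s * v) := fun u' v' => by
  simpa only [mul_assoc] using h (u' * u) (v * v')

lemma pow_succ_eq_of_pow_mul_mul_pow {a c z : M} (ha : IsIdempotentElem (a ^ n))
    (hc : a ^ n * c * a ^ n = a ^ (n + 1)) (h : ContextOmegaEq n z c) :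
    a ^ (n + 1) = a ^ n * z * a ^ n := by
  have := h (a ^ n) (a ^ n)
  rw [hc, pow_succ_pow_of_isIdempotentElem_pow ha,
    pow_succ_pow_succ_of_isIdempotentElem_pow ha] at this
  calc a ^ (n + 1) = a ^ n * a ^ n * z * (a ^ n * a ^ n) := by rw [this]; simp only [mul_assoc]
    _ = a ^ n * z * a ^ n := by rw [ha.eq]

lemma ContextOmegaEq.trans_insert (hn : 0 < n) (hidem : ∀ a : M, IsIdempotentElem (a ^ n))
    {e s x y q : M}
    (hes : ∀ t, (e * s * e * t) ^ (n + 1) = (e * s * e * t) ^ n * (e * t) * (e * s * e * t) ^ n)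
    (h : ContextOmegaEq n q (x * e * y)) : ContextOmegaEq n q (x * e * s * e * y) := by
  intro u v
  refine pow_succ_eq_of_pow_mul_mul_pow (hidem _) ?_ (h.mul_mul u v)
  simpa only [mul_assoc] using pow_mul_mul_pow_eq_pow_succ hn (x := u * x)
    (b := e * s * e * (y * v)) (d := e * (y * v)) (hidem _)
    (by simpa only [mul_assoc] using hes (y * v * (u * x)))

end ContextOmegaEq

theorem stmt_5_general {M : Type*} [Monoid M]
    (R : M → M → Prop)
    (n : ℕ) (hn : 0 < n) (hidem : ∀ m : M, IsIdempotentElem (m ^ n))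
    (heq : ∀ e s t : M, R e s →
      (e * s * e * t) ^ (n + 1)
        = (e * s * e * t) ^ n * (e * t) * (e * s * e * t) ^ n)
    (q s : M)
    (hqs : Relation.ReflTransGen
      (fun a b : M => ∃ e s' x y : M, R e s' ∧ a = x * e * y ∧
        b = x * e * s' * e * y) q s) :
    s ^ (n + 1) = s ^ n * q * s ^ n := by
  have hctx : ContextOmegaEq n q s := by
    induction hqs with
    | refl => exact contextOmegaEq_refl hidem q
    | tail _ hstep ih =>
      obtain ⟨e, s', x, y, hes, rfl, rfl⟩ := hstep
      exact ih.trans_insert hn hidem (heq e s' · hes)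
  simpa using hctx 1 1

/-- Lemma `trclos`/`eqformu`: let `M` be a finite monoid, `R` a relation whose
pairs `(e,s)` have idempotent first component, and `⪯` the least preorder such
that `x e y ⪯ x e s e y` for all `(e,s) ∈ R` and `x, y ∈ M`. If `M` satisfies
`(eset)^{ω+1} = (eset)^ω et (eset)^ω` for all `(e,s) ∈ R` and all `t`, then
`q ⪯ s` implies `s^{ω+1} = s^ω q s^ω`. -/
theorem stmt_5 {M : Type*} [Monoid M] [Fintype M]
    (R : M → M → Prop) (hR : ∀ e s : M, R e s → IsIdempotentElem e)
    (n : ℕ) (hn : 0 < n) (hidem : ∀ m : M, IsIdempotentElem (m ^ n))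
    (heq : ∀ e s t : M, R e s →
      (e * s * e * t) ^ (n + 1)
        = (e * s * e * t) ^ n * (e * t) * (e * s * e * t) ^ n)
    (q s : M)
    (hqs : Relation.ReflTransGen
      (fun a b : M => ∃ e s' x y : M, R e s' ∧ a = x * e * y ∧
        b = x * e * s' * e * y) q s) :
    s ^ (n + 1) = s ^ n * q * s ^ n :=
  stmt_5_general R n hn hidem heq q s hqs
end

section
/- Let M be a finite monoid satisfying (eset)^{ω+1} = (eset)^ω e t (eset)^ω for a relation R ⊆ E(M)×M of pairs (e,s) and all t ∈ M, where R is closed under the property that it arises from C-pairs. Single induction step: if s^{ω+1} = s^ω (x e q e y) s^ω holds where (e,q) ∈ R with e idempotent, and the equation (eqeys^ωx)^{ω+1} = (eqeys^ωx)^ω e y s^ω x (eqeys^ωx)^ω holds, then s^{ω+1} = s^ω (x e y) s^ω. -/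
/-- Inductive step in the proof of Lemma `eqformu`: in a finite monoid with
common idempotent exponent `n`, if `s^{n+1} = s^n (x e q e y) s^n` with `e`
idempotent, and `(eqeys^nx)^{n+1} = (eqeys^nx)^n e y s^n x (eqeys^nx)^n`,
then `s^{n+1} = s^n (x e y) s^n`. -/
theorem stmt_6 {M : Type*} [Monoid M] [Fintype M]
    (n : ℕ) (hn : 0 < n) (hidem : ∀ m : M, IsIdempotentElem (m ^ n))
    (s x y q e : M) (he : IsIdempotentElem e)
    (h1 : s ^ (n + 1) = s ^ n * (x * e * q * e * y) * s ^ n)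
    (h2 : (e * q * e * y * s ^ n * x) ^ (n + 1)
        = (e * q * e * y * s ^ n * x) ^ n * (e * y * s ^ n * x) *
          (e * q * e * y * s ^ n * x) ^ n) :
    s ^ (n + 1) = s ^ n * (x * e * y) * s ^ n := by
  -- idempotent powers
  have hss : s ^ n * s ^ n = s ^ n := hidem s
  have hss' : ∀ z : M, s ^ n * (s ^ n * z) = s ^ n * z := fun z => by
    rw [← mul_assoc, hss]
  have hpow : ∀ m : M, IsIdempotentElem m → m ^ n = m := by
    intro m hm
    obtain ⟨k, rfl⟩ : ∃ k, n = k + 1 := ⟨n - 1, (Nat.succ_pred_eq_of_pos hn).symm⟩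
    exact hm.pow_succ_eq k
  set a := s ^ n * x with ha
  set c := e * q * e * y with hc
  set d := e * y with hd
  have h1' : s ^ (n + 1) = a * c * s ^ n := by
    rw [h1]; simp only [ha, hc, mul_assoc]
  have hca : e * q * e * y * s ^ n * x = c * a := by
    simp only [ha, hc, mul_assoc]
  have hda : e * y * s ^ n * x = d * a := by
    simp only [ha, hd, mul_assoc]
  rw [hca, hda] at h2
  -- K1 : a * (c * a) = s * a
  have K1 : a * (c * a) = s * a := by
    have : a * (c * a) = a * c * s ^ n * x := by
      simp only [ha, mul_assoc]
    rw [this, ← h1', pow_succ', mul_assoc, ← ha]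
  -- K2 : a * (c*a)^k = s^k * a
  have K2 : ∀ k, a * (c * a) ^ k = s ^ k * a := by
    intro k
    induction k with
    | zero => simp
    | succ k ih =>
      rw [pow_succ, ← mul_assoc, ih, mul_assoc, K1, ← mul_assoc, ← pow_succ]
  -- K3 : s^(n+1) * a = s^n * a * (d * (s^n * a))
  have K3 : s ^ (n + 1) * a = s ^ n * a * (d * (s ^ n * a)) := by
    have h := K2 (n + 1)
    rw [h2] at h
    calc s ^ (n + 1) * a
        = a * ((c * a) ^ n * (d * a) * (c * a) ^ n) := h.symm
      _ = (a * (c * a) ^ n) * (d * (a * (c * a) ^ n)) := by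
          simp only [mul_assoc]
      _ = s ^ n * a * (d * (s ^ n * a)) := by rw [K2 n]
  set D := s ^ n * (x * e * y) with hD
  have hDad : s ^ n * a * d = D := by
    simp only [ha, hd, hD, mul_assoc, hss']
  -- K4 : s^(n+2) = D * s^(n+1)
  have K4 : s ^ (n + 2) = D * s ^ (n + 1) := by
    have h := congrArg (· * (c * s ^ n)) K3
    simp only [mul_assoc] at h
    -- LHS : s^(n+1) * (a * (c * s^n)) = s^(n+1) * s^(n+1)
    have hl : s ^ (n + 1) * (a * (c * s ^ n)) = s ^ (n + 2) := by
      have : a * (c * s ^ n) = s ^ (n + 1) := by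
        rw [h1']; simp only [mul_assoc]
      rw [this, ← pow_add]
      have e1 : n + 1 + (n + 1) = n + n + 2 := by omega
      rw [e1, pow_add, pow_add, hss, ← pow_add]
    have hr : s ^ n * (a * (d * (s ^ n * (a * (c * s ^ n)))))
        = D * s ^ (n + 1) := by
      have h1'' : a * (c * s ^ n) = s ^ (n + 1) := by
        rw [h1']; simp only [mul_assoc]
      rw [h1'']
      have : s ^ n * s ^ (n + 1) = s ^ (n + 1) := by
        rw [← pow_add]
        have : n + (n + 1) = n + n + 1 := by omega
        rw [this, pow_succ, pow_add, hss, ← pow_succ]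
      rw [this, ← hDad]
      simp only [mul_assoc]
    rw [hl, hr] at h
    exact h
  -- K5 : D^j * s^(n+1) = s^(n+1+j)
  have K5 : ∀ j, D ^ j * s ^ (n + 1) = s ^ (n + 1 + j) := by
    intro j
    induction j with
    | zero => simp
    | succ j ih =>
      rw [pow_succ', mul_assoc, ih]
      have e2 : n + 1 + (j + 1) = (n + 2) + j := by omega
      rw [e2, pow_add s (n + 1) j, pow_add s (n + 2) j, ← mul_assoc, ← K4]
  -- finish
  have hstep1 : s ^ (n + 1 + n * n) = s ^ (n + 1) := by
    rw [pow_add, pow_mul, hpow _ (hidem s), pow_succ', mul_assoc, hss]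
  have hDn : D ^ (n * n) = D ^ n := by
    rw [pow_mul, hpow _ (hidem D)]
  obtain ⟨k, hk⟩ : ∃ k, n = k + 1 := ⟨n - 1, (Nat.succ_pred_eq_of_pos hn).symm⟩
  calc s ^ (n + 1) = s ^ (n + 1 + n * n) := hstep1.symm
    _ = D ^ (n * n) * s ^ (n + 1) := (K5 (n * n)).symm
    _ = D ^ n * s ^ (n + 1) := by rw [hDn]
    _ = D * (D ^ k * s ^ (n + 1)) := by rw [hk, pow_succ', mul_assoc]
    _ = D * s ^ (n + 1 + k) := by rw [K5 k]
    _ = D * (s ^ n * s ^ n) := by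
          have e3 : n + 1 + k = n + n := by omega
          rw [e3, pow_add]
    _ = D * s ^ n := by rw [hss]
    _ = s ^ n * (x * e * y) * s ^ n := by rw [hD]
end

section
/- Let Q be a finite monoid and let q, r, s, t ∈ Q and e, f ∈ E(Q) be such that the 'swap equation' holds: (eqfre)^ω (esfte)^ω = (eqfre)^ω qft (esfte)^ω. Suppose further q₁, q₂ ∈ Q satisfy q₁ = q₁ s₁ e s₁' and q₂ = s₂' e s₂ q₂ and q₁ = q₁ t₁ f t₁' and q₂ = t₂' f t₂ q₂ for elements s₁, s₂, s₁', s₂', t₁, t₂, t₁', t₂' ∈ Q, and that the swap equation holds for the sextuple (s₁'t₁, ft₁'s₁, s₂t₂'f, t₂s₂', e, f) in the precise form (e s₁' t₁ f t₁' s₁ e)^ω (e s₂ t₂' f t₂ s₂' e)^ω = (e s₁' t₁ f t₁' s₁ e)^ω s₁' t₁ f t₂ s₂' (e s₂ t₂' f t₂ s₂' e)^ω. Then q₁ (s₁ e s₂) q₂ = q₁ (t₁ f t₂) q₂. -/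
private lemma aux_pow_left {Q : Type*} [Monoid Q] {x a : Q} (h : x * a = x) :
    ∀ n : ℕ, x * a ^ n = x := by
  intro n
  induction n with
  | zero => simp
  | succ k ih => rw [pow_succ, ← mul_assoc, ih, h]

private lemma aux_pow_right {Q : Type*} [Monoid Q] {x a : Q} (h : a * x = x) :
    ∀ n : ℕ, a ^ n * x = x := by
  intro n
  induction n with
  | zero => simp
  | succ k ih => rw [pow_succ, mul_assoc, h, ih]

/-- Final computation of the second step of Proposition `genmain`: in a finite
monoid `Q` with common idempotent exponent `n`, given idempotents `e, f`, a
sextuple satisfying the swap equation, elements `q₁, q₂` absorbing as stated,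
and the instance of the swap equation for `(s₁'t₁, ft₁'s₁, s₂t₂'f, t₂s₂', e, f)`,
one gets `q₁ (s₁ e s₂) q₂ = q₁ (t₁ f t₂) q₂`. -/
theorem stmt_7 {Q : Type*} [Monoid Q] [Fintype Q]
    (n : ℕ) (hn : 0 < n) (hidem : ∀ m : Q, IsIdempotentElem (m ^ n))
    (q r s t e f : Q) (he : IsIdempotentElem e) (hf : IsIdempotentElem f)
    (hswap : (e * q * f * r * e) ^ n * (e * s * f * t * e) ^ n
           = (e * q * f * r * e) ^ n * (q * f * t) * (e * s * f * t * e) ^ n)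
    (q₁ q₂ s₁ s₂ s₁' s₂' t₁ t₂ t₁' t₂' : Q)
    (h1 : q₁ = q₁ * s₁ * e * s₁') (h2 : q₂ = s₂' * e * s₂ * q₂)
    (h3 : q₁ = q₁ * t₁ * f * t₁') (h4 : q₂ = t₂' * f * t₂ * q₂)
    (hswap2 : (e * s₁' * t₁ * f * t₁' * s₁ * e) ^ n *
                (e * s₂ * t₂' * f * t₂ * s₂' * e) ^ n
            = (e * s₁' * t₁ * f * t₁' * s₁ * e) ^ n *
                (s₁' * t₁ * f * t₂ * s₂') *
                (e * s₂ * t₂' * f * t₂ * s₂' * e) ^ n) :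
    q₁ * (s₁ * e * s₂) * q₂ = q₁ * (t₁ * f * t₂) * q₂ := by
  set A := e * s₁' * t₁ * f * t₁' * s₁ * e with hAdef
  set B := e * s₂ * t₂' * f * t₂ * s₂' * e with hBdef
  have hA : (q₁ * s₁ * e) * A = q₁ * s₁ * e := by
    calc (q₁ * s₁ * e) * A
        = q₁ * s₁ * (e * e) * s₁' * t₁ * f * t₁' * s₁ * e := by
          rw [hAdef]; simp only [mul_assoc]
      _ = q₁ * s₁ * e * s₁' * t₁ * f * t₁' * s₁ * e := by rw [he]
      _ = q₁ * t₁ * f * t₁' * (s₁ * e) := by rw [← h1]; simp only [mul_assoc]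
      _ = q₁ * s₁ * e := by rw [← h3]; simp only [mul_assoc]
  have hB : B * (e * s₂ * q₂) = e * s₂ * q₂ := by
    calc B * (e * s₂ * q₂)
        = e * s₂ * t₂' * f * t₂ * (s₂' * (e * e) * s₂ * q₂) := by
          rw [hBdef]; simp only [mul_assoc]
      _ = e * s₂ * t₂' * f * t₂ * (s₂' * e * s₂ * q₂) := by rw [he]
      _ = e * s₂ * (t₂' * f * t₂ * q₂) := by rw [← h2]; simp only [mul_assoc]
      _ = e * s₂ * q₂ := by rw [← h4]
  have hAn : (q₁ * s₁ * e) * A ^ n = q₁ * s₁ * e := aux_pow_left hA n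
  have hBn : B ^ n * (e * s₂ * q₂) = e * s₂ * q₂ := aux_pow_right hB n
  calc q₁ * (s₁ * e * s₂) * q₂
      = q₁ * s₁ * (e * e) * s₂ * q₂ := by rw [he]; simp only [mul_assoc]
    _ = ((q₁ * s₁ * e) * A ^ n) * (B ^ n * (e * s₂ * q₂)) := by
        rw [hAn, hBn]; simp only [mul_assoc]
    _ = (q₁ * s₁ * e) * (A ^ n * (s₁' * t₁ * f * t₂ * s₂') * B ^ n) * (e * s₂ * q₂) := by
        rw [← hswap2]; simp only [mul_assoc]
    _ = ((q₁ * s₁ * e) * A ^ n) * (s₁' * t₁ * f * t₂ * s₂') * (B ^ n * (e * s₂ * q₂)) := by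
        simp only [mul_assoc]
    _ = q₁ * s₁ * e * s₁' * (t₁ * f * t₂ * (s₂' * e * s₂ * q₂)) := by
        rw [hAn, hBn]; simp only [mul_assoc]
    _ = q₁ * (t₁ * f * t₂) * q₂ := by rw [← h1, ← h2]; simp only [mul_assoc]
end

section
/- Let C be a Boolean algebra of languages over A (closed under union, intersection, complement, containing ∅ and A*). Let L₁ ⊆ A* and L₂ a finite set of languages. Then (L₁, L₂) is C-coverable if and only if {L₁} ∪ L₂ is C-coverable (where a finite set L of languages is C-coverable means (A*, L) is C-coverable). -/
/-- `(L, Ls)` is `C`-coverable: there is a finite set `K` of languages of `C`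
covering `L` with every member of `K` disjoint from some language of `Ls`. -/
def Coverable {A : Type*} (C : Set (Set (List A))) (L : Set (List A))
    (Ls : Finset (Set (List A))) : Prop :=
  ∃ K : Finset (Set (List A)), (∀ k ∈ K, k ∈ C) ∧ (L ⊆ ⋃ k ∈ K, k) ∧
    ∀ k ∈ K, ∃ l ∈ Ls, k ∩ l = ∅

open Classical

lemma aux_union {A : Type*} (C : Set (Set (List A)))
    (hempty : ∅ ∈ C) (hunion : ∀ K ∈ C, ∀ K' ∈ C, K ∪ K' ∈ C)
    (K : Finset (Set (List A))) (hK : ∀ k ∈ K, k ∈ C) :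
    (⋃ k ∈ K, k) ∈ C := by
  induction K using Finset.induction_on with
  | empty => simpa using hempty
  | @insert a s hx ih =>
    rw [Finset.set_biUnion_insert]
    exact hunion _ (hK a (Finset.mem_insert_self _ _)) _
      (ih fun k hk => hK k (Finset.mem_insert_of_mem hk))

/-- Lemma `covbopl`: for a Boolean algebra `C`, `(L₁, L₂)` is `C`-coverable iff
the finite set `{L₁} ∪ L₂` is `C`-coverable (i.e. `(A*, {L₁} ∪ L₂)` is). -/
theorem stmt_10 {A : Type*} [Fintype A] (C : Set (Set (List A)))
    (hempty : ∅ ∈ C) (huniv : Set.univ ∈ C)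
    (hunion : ∀ K ∈ C, ∀ K' ∈ C, K ∪ K' ∈ C)
    (hinter : ∀ K ∈ C, ∀ K' ∈ C, K ∩ K' ∈ C)
    (hcompl : ∀ K ∈ C, Kᶜ ∈ C)
    (L₁ : Set (List A)) (L₂ : Finset (Set (List A))) :
    Coverable C L₁ L₂ ↔ Coverable C Set.univ (insert L₁ L₂) := by
  constructor
  · rintro ⟨K, hKC, hcov, hdis⟩
    refine ⟨insert (⋃ k ∈ K, k)ᶜ K, ?_, ?_, ?_⟩
    · intro k hk
      rcases Finset.mem_insert.1 hk with rfl | hk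
      · exact hcompl _ (aux_union C hempty hunion K hKC)
      · exact hKC k hk
    · intro x _
      rw [Finset.set_biUnion_insert]
      by_cases hx : x ∈ ⋃ k ∈ K, k
      · exact Set.mem_union_right _ hx
      · exact Set.mem_union_left _ hx
    · intro k hk
      rcases Finset.mem_insert.1 hk with rfl | hk
      · refine ⟨L₁, Finset.mem_insert_self _ _, ?_⟩
        ext x
        simp only [Set.mem_inter_iff, Set.mem_compl_iff, Set.mem_empty_iff_false, iff_false,
          not_and]
        intro h1 h2
        exact h1 (hcov h2)
      · obtain ⟨l, hl, hdl⟩ := hdis k hk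
        exact ⟨l, Finset.mem_insert_of_mem hl, hdl⟩
  · rintro ⟨K, hKC, hcov, hdis⟩
    refine ⟨K.filter (fun k => ∃ l ∈ L₂, k ∩ l = ∅), ?_, ?_, ?_⟩
    · intro k hk
      exact hKC k (Finset.mem_filter.1 hk).1
    · intro x hx
      obtain ⟨k, hkK, hxk⟩ := by
        simpa using hcov (Set.mem_univ x)
      obtain ⟨l, hl, hdl⟩ := hdis k hkK
      rcases Finset.mem_insert.1 hl with rfl | hl
      · exfalso
        have : x ∈ k ∩ l := ⟨hxk, hx⟩
        rw [hdl] at this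
        exact this
      · exact Set.mem_biUnion (Finset.mem_filter.2 ⟨hkK, l, hl, hdl⟩) hxk
    · intro k hk
      exact (Finset.mem_filter.1 hk).2
end

section
/- Let C be a positive prevariety and α : A* → M a morphism into a finite monoid. If (s₁,t₁) and (s₂,t₂) are C-pairs for α (meaning α⁻¹(sᵢ) is not C-separable from α⁻¹(tᵢ)), then (s₁s₂, t₁t₂) is also a C-pair for α. -/
/-!
Suppose `K ∈ C` separates `α⁻¹(s₁s₂)` from `α⁻¹(t₁t₂)`, and write `K = φ⁻¹(F)` with `φ` into a
finite monoid. The left quotient `v⁻¹K` depends only on `φ v`, so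
`⋂_{α v = s₁} v⁻¹K` is a finite intersection of quotients of `K`, hence lies in `C`. It contains
`α⁻¹(s₂)`, so as `(s₂, t₂)` is a `C`-pair it contains some `u₂` with `α u₂ = t₂`. Then `K u₂⁻¹ ∈ C`
contains `α⁻¹(s₁)`, so it contains some `v₁` with `α v₁ = t₁`, and `v₁ u₂ ∈ K ∩ α⁻¹(t₁t₂)`.
-/

open Set

namespace FreeMonoid

variable {A : Type*} {C : Set (Set (FreeMonoid A))}

theorem inter_nonempty_of_not_separable {L L' K : Set (FreeMonoid A)}
    (h : ¬ ∃ K ∈ C, L ⊆ K ∧ K ∩ L' = ∅) (hK : K ∈ C) (hLK : L ⊆ K) : (K ∩ L').Nonempty :=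
  nonempty_iff_ne_empty.2 fun hKL' => h ⟨K, hK, hLK, hKL'⟩

theorem biInter_mem_of_finite (huniv : univ ∈ C) (hinter : ∀ L ∈ C, ∀ K ∈ C, L ∩ K ∈ C)
    {ι : Type*} {S : Set ι} (hS : S.Finite) {f : ι → Set (FreeMonoid A)}
    (hf : ∀ i ∈ S, f i ∈ C) : (⋂ i ∈ S, f i) ∈ C := by
  induction S, hS using Set.Finite.induction_on with
  | empty => simpa using huniv
  | @insert a S _ _ ih =>
    rw [biInter_insert]
    exact hinter _ (hf a (mem_insert a S)) _ (ih fun i hi => hf i (mem_insert_of_mem a hi))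

theorem leftQuot_preimage_eq_of_map_eq {N : Type*} [Monoid N] (φ : FreeMonoid A →* N) (F : Set N)
    {v v' : FreeMonoid A} (h : φ v = φ v') :
    {u | v * u ∈ φ ⁻¹' F} = {u | v' * u ∈ φ ⁻¹' F} := by
  ext u
  simp only [mem_ofPred_eq, mem_preimage, map_mul, h]

theorem biInter_leftQuot_mem (huniv : univ ∈ C) (hinter : ∀ L ∈ C, ∀ K ∈ C, L ∩ K ∈ C)
    (hquot : ∀ L ∈ C, ∀ w : FreeMonoid A, {u | w * u ∈ L} ∈ C)
    {N : Type*} [Monoid N] [Finite N] (φ : FreeMonoid A →* N) (F : Set N) (hK : φ ⁻¹' F ∈ C)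
    (S : Set (FreeMonoid A)) : (⋂ v ∈ S, {u | v * u ∈ φ ⁻¹' F}) ∈ C := by
  obtain ⟨S', hS'S, hbij⟩ := exists_subset_bijOn S φ
  have hS' : S'.Finite := Finite.of_finite_image (hbij.image_eq ▸ toFinite _) hbij.injOn
  suffices h : (⋂ v ∈ S, {u | v * u ∈ φ ⁻¹' F}) = ⋂ v ∈ S', {u | v * u ∈ φ ⁻¹' F} by
    rw [h]
    exact biInter_mem_of_finite huniv hinter hS' fun v _ => hquot _ hK v
  refine (biInter_subset_biInter_left hS'S).antisymm (subset_iInter₂ fun v hv => ?_)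
  obtain ⟨v', hv', hφ⟩ := hbij.surjOn (mem_image_of_mem φ hv)
  rw [← leftQuot_preimage_eq_of_map_eq φ F hφ]
  exact biInter_subset_of_mem hv'

end FreeMonoid

theorem stmt_12_general {A : Type*} {M : Type*} [Monoid M]
    (C : Set (Set (FreeMonoid A)))
    (hreg : ∀ L ∈ C, ∃ (N : Type) (_ : Monoid N) (_ : Fintype N),
      ∃ (φ : FreeMonoid A →* N) (F : Set N), L = φ ⁻¹' F)
    (huniv : Set.univ ∈ C)
    (hinter : ∀ L ∈ C, ∀ K ∈ C, L ∩ K ∈ C)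
    (hquot : ∀ L ∈ C, ∀ w : FreeMonoid A,
      {u | w * u ∈ L} ∈ C ∧ {u | u * w ∈ L} ∈ C)
    (α : FreeMonoid A →* M) (s₁ t₁ s₂ t₂ : M)
    (h1 : ¬ ∃ K ∈ C, α ⁻¹' {s₁} ⊆ K ∧ K ∩ α ⁻¹' {t₁} = ∅)
    (h2 : ¬ ∃ K ∈ C, α ⁻¹' {s₂} ⊆ K ∧ K ∩ α ⁻¹' {t₂} = ∅) :
    ¬ ∃ K ∈ C, α ⁻¹' {s₁ * s₂} ⊆ K ∧ K ∩ α ⁻¹' {t₁ * t₂} = ∅ := by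
  rintro ⟨K, hKC, hsub, hdisj⟩
  obtain ⟨N, _, _, φ, F, rfl⟩ := hreg K hKC
  have hK₂ := FreeMonoid.biInter_leftQuot_mem huniv hinter (fun L hL w => (hquot L hL w).1) φ F hKC
    (α ⁻¹' {s₁})
  obtain ⟨u₂, hu₂K, hu₂⟩ := FreeMonoid.inter_nonempty_of_not_separable h2 hK₂
    fun u hu => mem_iInter₂.2 fun v hv => hsub (by simp_all)
  obtain ⟨v₁, hv₁K, hv₁⟩ := FreeMonoid.inter_nonempty_of_not_separable h1 (hquot _ hKC u₂).2
    fun v hv => mem_iInter₂.1 hu₂K v hv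
  exact hdisj.subset ⟨hv₁K, by simp_all⟩

/-- Corollary `pairmult`: for a positive prevariety `C` (a lattice of regular
languages closed under quotients) and a morphism `α : A* → M` into a finite
monoid, `C`-pairs are closed under componentwise multiplication. Here `(s,t)`
is a `C`-pair when `α⁻¹(s)` is not `C`-separable from `α⁻¹(t)`. -/
theorem stmt_12 {A : Type*} [Fintype A] {M : Type*} [Monoid M] [Fintype M]
    (C : Set (Set (FreeMonoid A)))
    (hreg : ∀ L ∈ C, ∃ (N : Type) (_ : Monoid N) (_ : Fintype N),
      ∃ (φ : FreeMonoid A →* N) (F : Set N), L = φ ⁻¹' F)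
    (hempty : ∅ ∈ C) (huniv : Set.univ ∈ C)
    (hunion : ∀ L ∈ C, ∀ K ∈ C, L ∪ K ∈ C)
    (hinter : ∀ L ∈ C, ∀ K ∈ C, L ∩ K ∈ C)
    (hquot : ∀ L ∈ C, ∀ w : FreeMonoid A,
      {u | w * u ∈ L} ∈ C ∧ {u | u * w ∈ L} ∈ C)
    (α : FreeMonoid A →* M) (s₁ t₁ s₂ t₂ : M)
    (h1 : ¬ ∃ K ∈ C, α ⁻¹' {s₁} ⊆ K ∧ K ∩ α ⁻¹' {t₁} = ∅)
    (h2 : ¬ ∃ K ∈ C, α ⁻¹' {s₂} ⊆ K ∧ K ∩ α ⁻¹' {t₂} = ∅) :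
    ¬ ∃ K ∈ C, α ⁻¹' {s₁ * s₂} ⊆ K ∧ K ∩ α ⁻¹' {t₁ * t₂} = ∅ :=
  stmt_12_general C hreg huniv hinter hquot α s₁ t₁ s₂ t₂ h1 h2
end

section
/- Let C be a positive prevariety and α : A* → M a morphism. For every C-morphism η : A* → (N,≤), every C-pair (s,t) for α is an η-pair: there exist u, v ∈ A* with η(u) ≤ η(v), α(u) = s, α(v) = t. -/
/-! The upward closure of `η(α⁻¹ s)` is an upper set of `N`, so its preimage under `η` lies in `C`.
It contains `α⁻¹ s`, and if no `u, v` with `η u ≤ η v`, `α u = s`, `α v = t` existed it would be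
disjoint from `α⁻¹ t`, separating the two languages. -/

section UpperClosureSeparation

variable {X N : Type*} [Preorder N] (f : X → N)

theorem subset_preimage_upperClosure_image (S : Set X) :
    S ⊆ f ⁻¹' upperClosure (f '' S) :=
  fun _ hx => subset_upperClosure (Set.mem_image_of_mem f hx)

theorem preimage_upperClosure_image_inter_eq_empty {S T : Set X}
    (h : ∀ u ∈ S, ∀ v ∈ T, ¬ f u ≤ f v) :
    (f ⁻¹' upperClosure (f '' S) : Set X) ∩ T = ∅ := by
  refine Set.eq_empty_iff_forall_notMem.mpr fun v ⟨hvS, hvT⟩ => ?_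
  obtain ⟨_, ⟨u, hu, rfl⟩, hle⟩ := mem_upperClosure.mp hvS
  exact h u hu v hvT hle

end UpperClosureSeparation

theorem stmt_13_general {A : Type*} {M : Type*} [Monoid M]
    {N : Type*} [Monoid N] [PartialOrder N]
    (C : Set (Set (FreeMonoid A)))
    (α : FreeMonoid A →* M)
    (η : FreeMonoid A →* N)
    (hη : ∀ F : Set N, IsUpperSet F → η ⁻¹' F ∈ C)
    (s t : M)
    (hpair : ¬ ∃ K ∈ C, α ⁻¹' {s} ⊆ K ∧ K ∩ α ⁻¹' {t} = ∅) :
    ∃ u v : FreeMonoid A, η u ≤ η v ∧ α u = s ∧ α v = t := by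
  by_contra hno
  refine hpair ⟨η ⁻¹' upperClosure (η '' (α ⁻¹' {s})), hη _ (upperClosure _).upper,
    subset_preimage_upperClosure_image η _,
    preimage_upperClosure_image_inter_eq_empty η fun u hu v hv hle => hno ⟨u, v, hle, hu, hv⟩⟩

/-- First half of Lemma `pairmor`: for a positive prevariety `C`, a morphism
`α : A* → M` and a `C`-morphism `η : A* → (N,≤)`, every `C`-pair `(s,t)` for
`α` is an `η`-pair: there are words `u, v` with `η u ≤ η v`, `α u = s`,
`α v = t`. -/
theorem stmt_13 {A : Type*} [Fintype A] {M : Type*} [Monoid M] [Fintype M]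
    {N : Type*} [Monoid N] [Fintype N] [PartialOrder N]
    (C : Set (Set (FreeMonoid A)))
    (hreg : ∀ L ∈ C, ∃ (P : Type) (_ : Monoid P) (_ : Fintype P),
      ∃ (φ : FreeMonoid A →* P) (F : Set P), L = φ ⁻¹' F)
    (hempty : ∅ ∈ C) (huniv : Set.univ ∈ C)
    (hunion : ∀ L ∈ C, ∀ K ∈ C, L ∪ K ∈ C)
    (hinter : ∀ L ∈ C, ∀ K ∈ C, L ∩ K ∈ C)
    (hquot : ∀ L ∈ C, ∀ w : FreeMonoid A,
      {u | w * u ∈ L} ∈ C ∧ {u | u * w ∈ L} ∈ C)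
    (α : FreeMonoid A →* M)
    (η : FreeMonoid A →* N) (hηsurj : Function.Surjective η)
    (hcompat : ∀ a b c d : N, a ≤ b → c ≤ d → a * c ≤ b * d)
    (hη : ∀ F : Set N, IsUpperSet F → η ⁻¹' F ∈ C)
    (s t : M)
    (hpair : ¬ ∃ K ∈ C, α ⁻¹' {s} ⊆ K ∧ K ∩ α ⁻¹' {t} = ∅) :
    ∃ u v : FreeMonoid A, η u ≤ η v ∧ α u = s ∧ α v = t :=
  stmt_13_general C α η hη s t hpair
end

section
/- Well-quasi-order step of the pattern argument: Let N be a finite monoid, η : A* → N a morphism, and consider η-patterns (w₁,e₁,…,wₙ,eₙ,w_{n+1}) with all |wᵢ| ≤ 2k for a fixed bound k, ordered by the relation ⪯ defined via insertion of pattern blocks whose η-image equals the inserted idempotent. Then ⪯ is a well-quasi-order on this set: every infinite sequence (p̄ᵢ) of such patterns contains indices i < j with p̄ᵢ ⪯ p̄ⱼ. -/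
/-!
Read a pattern left to right with the finite automaton whose state is the pair
(`η` of the prefix read so far, last idempotent read), and tag every block, and the final word,
with the state before it. Bounded block lengths make the tagged letters range over a finite set,
so by Higman's lemma some encoding embeds as a subsequence into a later one. In an embedding
the blocks skipped after a matched block `(u, e)` bring the automaton back to its state: they
end with idempotent `e` and do not change `ρ = η(prefix · u)`. Since `e ≤_J ρ` and `ρ e = ρ`,
stability of finite monoids gives `e = d ρ`, which forces the skipped blocks to have `η`-image
`e`; they are exactly the patterns inserted by `⪯`.
-/

namespace Stmt16

/-- An `η`-pattern: a list of blocks `(wᵢ, eᵢ)` together with a final word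
`w_{n+1}`. -/
abbrev Pattern (A N : Type*) := List (FreeMonoid A × N) × FreeMonoid A

/-- The word `π(p̄) = w₁ ⋯ w_{n+1}` of a pattern. -/
def pword {A N : Type*} [Monoid N] (p : Pattern A N) : FreeMonoid A :=
  (p.1.map Prod.fst).prod * p.2

/-- Green's preorder `x ≤_J y`. -/
def leJ {N : Type*} [Monoid N] (x y : N) : Prop := ∃ u v : N, x = u * y * v

/-- The word following the `i`-th block: `w_{i+1}` (or the final word). -/
def nextWord {A N : Type*} (p : Pattern A N) (i : ℕ) : FreeMonoid A :=
  (((p.1.drop (i + 1)).head?).map Prod.fst).getD p.2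

/-- `p` is an `η`-pattern: nonemptiness of the words (when there is at least
one block), each `eᵢ` is an idempotent `J`-equivalent to `η(π(p̄))`, and
`η(wᵢ)eᵢ = η(wᵢ)`, `eᵢ η(w_{i+1}) = η(w_{i+1})`. -/
def IsPattern {A N : Type*} [Monoid N] (η : FreeMonoid A →* N)
    (p : Pattern A N) : Prop :=
  (p.1 ≠ [] → (∀ b ∈ p.1, b.1 ≠ 1) ∧ p.2 ≠ 1) ∧
  (∀ b ∈ p.1, IsIdempotentElem b.2 ∧ leJ b.2 (η (pword p)) ∧
    leJ (η (pword p)) b.2) ∧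
  (∀ i, ∀ hi : i < p.1.length,
    η (p.1.get ⟨i, hi⟩).1 * (p.1.get ⟨i, hi⟩).2 = η (p.1.get ⟨i, hi⟩).1 ∧
    (p.1.get ⟨i, hi⟩).2 * η (nextWord p i) = η (nextWord p i))

/-- `p` is `α`-guarded: for each block there is an idempotent `g ∈ E(M)` with
`η⁻¹(eᵢ) ∩ α⁻¹(g) ≠ ∅`, `α(wᵢ)g = α(wᵢ)` and `g α(w_{i+1}) = α(w_{i+1})`. -/
def Guarded {A M N : Type*} [Monoid M] [Monoid N] (η : FreeMonoid A →* N)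
    (α : FreeMonoid A →* M) (p : Pattern A N) : Prop :=
  ∀ i, ∀ hi : i < p.1.length, ∃ g : M, IsIdempotentElem g ∧
    (∃ w : FreeMonoid A, η w = (p.1.get ⟨i, hi⟩).2 ∧ α w = g) ∧
    α (p.1.get ⟨i, hi⟩).1 * g = α (p.1.get ⟨i, hi⟩).1 ∧
    g * α (nextWord p i) = α (nextWord p i)

/-- Membership in the set `Q`: `α`-guarded `η`-patterns all of whose words
have length at most `2k`. -/
def InQ {A M N : Type*} [Monoid M] [Monoid N] (η : FreeMonoid A →* N)
    (α : FreeMonoid A →* M) (k : ℕ) (p : Pattern A N) : Prop :=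
  IsPattern η p ∧ Guarded η α p ∧
  (∀ b ∈ p.1, (FreeMonoid.toList b.1).length ≤ 2 * k) ∧
  (FreeMonoid.toList p.2).length ≤ 2 * k

/-- Joining two patterns with an idempotent in between. -/
def join {A N : Type*} (p : Pattern A N) (f : N) (q : Pattern A N) :
    Pattern A N :=
  (p.1 ++ (p.2, f) :: q.1, q.2)

/-- The ordering `p ⪯ q` on `Q`: `q` is obtained from a split
`p = (p̄₁, f₁, …, p̄_ℓ, f_ℓ, p̄_{ℓ+1})` by inserting patterns `q̄ᵢ ∈ Q` with
`η(q̄ᵢ) = fᵢ`, yielding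
`q = (p̄₁, f₁, q̄₁, f₁, …, p̄_ℓ, f_ℓ, q̄_ℓ, f_ℓ, p̄_{ℓ+1})`. -/
def Prec {A M N : Type*} [Monoid M] [Monoid N] (η : FreeMonoid A →* N)
    (α : FreeMonoid A →* M) (k : ℕ) (p q : Pattern A N) : Prop :=
  ∃ (blocks : List (Pattern A N × N × Pattern A N)) (plast : Pattern A N),
    InQ η α k plast ∧
    (∀ b ∈ blocks, InQ η α k b.1 ∧ InQ η α k b.2.2 ∧
      IsIdempotentElem b.2.1 ∧ η (pword b.2.2) = b.2.1) ∧
    p = blocks.foldr (fun b acc => join b.1 b.2.1 acc) plast ∧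
    q = blocks.foldr (fun b acc => join b.1 b.2.1 (join b.2.2 b.2.1 acc)) plast

section Green

variable {M : Type*} [Monoid M]

theorem leJ_trans {x y z : M} (hxy : leJ x y) (hyz : leJ y z) : leJ x z := by
  obtain ⟨u, v, rfl⟩ := hxy
  obtain ⟨u', v', rfl⟩ := hyz
  exact ⟨u * u', v' * v, by simp only [mul_assoc]⟩

theorem leJ_mul_right (x y : M) : leJ (x * y) x := ⟨1, y, by rw [one_mul]⟩

theorem leJ_mul_left (x y : M) : leJ (x * y) y := ⟨x, 1, by rw [mul_one]⟩

variable [Finite M]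

theorem exists_pow_isIdempotentElem (x : M) : ∃ n ≠ 0, IsIdempotentElem (x ^ n) := by
  obtain ⟨a, b, hab, h⟩ : ∃ a b : ℕ, a < b ∧ x ^ a = x ^ b := by
    obtain ⟨a, b, hne, h⟩ := Finite.exists_ne_map_eq_of_infinite (x ^ · : ℕ → M)
    rcases hne.lt_or_gt with hlt | hlt
    exacts [⟨a, b, hlt, h⟩, ⟨b, a, hlt, h.symm⟩]
  have period : ∀ n, a ≤ n → x ^ (n + (b - a)) = x ^ n := by
    intro n hn
    obtain ⟨c, rfl⟩ := Nat.exists_eq_add_of_le hn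
    rw [show a + c + (b - a) = c + b by omega, pow_add, ← h, ← pow_add, add_comm]
  have periods : ∀ j n, a ≤ n → x ^ (n + j * (b - a)) = x ^ n := by
    intro j
    induction j with
    | zero => simp
    | succ j ih =>
      intro n hn
      rw [add_mul, one_mul, ← add_assoc, period _ (by omega), ih n hn]
  refine ⟨b * (b - a), (Nat.mul_pos (by omega) (by omega)).ne', ?_⟩
  have hle : a ≤ b * (b - a) := hab.le.trans (Nat.le_mul_of_pos_right b (by omega))
  rw [IsIdempotentElem, ← pow_add, periods b _ hle]

/-- Stability of finite monoids: `e ≤_J ρ` and `ρ ≤_L e` give `e ≤_L ρ`. -/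
theorem exists_mul_eq_of_leJ {e ρ : M} (hJ : leJ e ρ) (hρe : ρ * e = ρ) : ∃ d, d * ρ = e := by
  obtain ⟨u, v, he⟩ := hJ
  have iterate : ∀ n : ℕ, e = (u * ρ) ^ n * e * v ^ n := by
    intro n
    induction n with
    | zero => simp
    | succ n ih =>
      calc e = (u * ρ) ^ n * (u * (ρ * e) * v) * v ^ n := by rw [hρe, ← he, ← ih]
        _ = (u * ρ) ^ (n + 1) * e * v ^ (n + 1) := by
          rw [pow_succ, pow_succ']; simp only [mul_assoc]
  obtain ⟨n, hn, hidem⟩ := exists_pow_isIdempotentElem (u * ρ)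
  obtain ⟨m, rfl⟩ := Nat.exists_eq_succ_of_ne_zero hn
  have hfix : (u * ρ) ^ (m + 1) * e = e := by
    rw [iterate (m + 1), ← mul_assoc, ← mul_assoc, hidem.eq]
  refine ⟨(u * ρ) ^ m * u, ?_⟩
  calc (u * ρ) ^ m * u * ρ = (u * ρ) ^ (m + 1) * e := by
        rw [pow_succ]; simp only [mul_assoc, hρe]
    _ = e := hfix

theorem eq_of_leJ_of_mul_eq {e ρ z : M} (hJ : leJ e ρ) (hρe : ρ * e = ρ) (hρz : ρ * z = ρ)
    (hez : e * z = z) : z = e := by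
  obtain ⟨d, hd⟩ := exists_mul_eq_of_leJ hJ hρe
  rw [← hez, ← hd, mul_assoc, hρz]

end Green

section Junctions

variable {A N : Type*}

def headWord (l : List (FreeMonoid A × N)) (w : FreeMonoid A) : FreeMonoid A :=
  (l.head?.map Prod.fst).getD w

theorem headWord_append_cons (l m : List (FreeMonoid A × N)) (v w : FreeMonoid A) (f : N) :
    headWord (l ++ (v, f) :: m) w = headWord l v := by
  cases l <;> rfl

def junctions : List (FreeMonoid A × N) → FreeMonoid A → List ((FreeMonoid A × N) × FreeMonoid A)
  | [], _ => []
  | b :: l, w => (b, headWord l w) :: junctions l w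

theorem junctions_append_cons (l m : List (FreeMonoid A × N)) (v w : FreeMonoid A) (f : N) :
    junctions (l ++ (v, f) :: m) w = junctions l v ++ ((v, f), headWord m w) :: junctions m w := by
  induction l with
  | nil => rfl
  | cons b l ih => simp only [List.cons_append, junctions, ih, headWord_append_cons]

def AllJunctions (P : FreeMonoid A × N → FreeMonoid A → Prop) (p : Pattern A N) : Prop :=
  ∀ i, ∀ hi : i < p.1.length, P (p.1.get ⟨i, hi⟩) (nextWord p i)

theorem allJunctions_iff {P : FreeMonoid A × N → FreeMonoid A → Prop} {p : Pattern A N} :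
    AllJunctions P p ↔ ∀ j ∈ junctions p.1 p.2, P j.1 j.2 := by
  obtain ⟨l, w⟩ := p
  induction l with
  | nil => simp [AllJunctions, junctions]
  | cons b l ih =>
    rw [junctions, List.forall_mem_cons, ← ih]
    constructor
    · intro h
      exact ⟨h 0 (by simp), fun i hi => h (i + 1) (by simpa using hi)⟩
    · rintro ⟨h0, h⟩ (_ | i) hi
      exacts [h0, h i (by simpa using hi)]

theorem allJunctions_join {P : FreeMonoid A × N → FreeMonoid A → Prop} {a b : Pattern A N}
    {f : N} :
    AllJunctions P (join a f b) ↔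
      AllJunctions P a ∧ P (a.2, f) (headWord b.1 b.2) ∧ AllJunctions P b := by
  simp only [allJunctions_iff, join, junctions_append_cons, List.forall_mem_append,
    List.forall_mem_cons]

theorem join_join (r p t : Pattern A N) (e g : N) :
    join r e (join p g t) = join (join r e p) g t := by
  simp [join]

end Junctions

section Segments

variable {A M N : Type*} [Monoid M] [Monoid N] (η : FreeMonoid A →* N)
  (α : FreeMonoid A →* M) (k : ℕ)

def IsJunction (b : FreeMonoid A × N) (v : FreeMonoid A) : Prop :=
  η b.1 * b.2 = η b.1 ∧ b.2 * η v = η v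

def IsGuard (b : FreeMonoid A × N) (v : FreeMonoid A) : Prop :=
  ∃ g : M, IsIdempotentElem g ∧ (∃ w : FreeMonoid A, η w = b.2 ∧ α w = g) ∧
    α b.1 * g = α b.1 ∧ g * α v = α v

variable {η α k}

theorem pword_join (a b : Pattern A N) (f : N) : pword (join a f b) = pword a * pword b := by
  simp [pword, join, mul_assoc]

theorem eta_pword_mul_eq {p : Pattern A N} {f : N} (h : η p.2 * f = η p.2) :
    η (pword p) * f = η (pword p) := by
  rw [pword, map_mul, mul_assoc, h]

theorem mul_eta_pword_eq {p : Pattern A N} {f : N}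
    (h : f * η (headWord p.1 p.2) = η (headWord p.1 p.2)) : f * η (pword p) = η (pword p) := by
  obtain ⟨_ | ⟨b, l⟩, w⟩ := p
  · simpa [pword, headWord] using h
  · simp only [headWord, List.head?_cons, Option.map_some, Option.getD_some] at h
    simp only [pword, List.map_cons, List.prod_cons, map_mul, ← mul_assoc, h]

theorem IsPattern.isIdempotentElem_of_join {a b : Pattern A N} {f : N}
    (h : IsPattern η (join a f b)) : IsIdempotentElem f :=
  (h.2.1 (a.2, f) (by simp [join])).1

theorem IsPattern.of_join {a b : Pattern A N} {f : N} (h : IsPattern η (join a f b)) :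
    IsPattern η a ∧ IsPattern η b := by
  obtain ⟨hne, hclass, hjun⟩ := h
  obtain ⟨hblocks, hlast⟩ := hne (by simp [join])
  obtain ⟨hja, ⟨haf, hfb⟩, hjb⟩ := (allJunctions_join (P := IsJunction η)).1 hjun
  obtain ⟨-, hfP, -⟩ := hclass (a.2, f) (by simp [join])
  have hP : η (pword (join a f b)) = η (pword a) * η (pword b) := by rw [pword_join, map_mul]
  -- both halves are squeezed between `f` and the whole pattern in the `J`-order
  have transfer : ∀ {Q : N}, leJ (η (pword (join a f b))) Q → leJ Q f →
      ∀ g ∈ (join a f b).1, IsIdempotentElem g.2 ∧ leJ g.2 Q ∧ leJ Q g.2 := by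
    intro Q hPQ hQf g hg
    obtain ⟨hidem, hgP, hPg⟩ := hclass g hg
    exact ⟨hidem, leJ_trans hgP hPQ, leJ_trans (leJ_trans hQf hfP) hPg⟩
  have haP : leJ (η (pword a)) f := eta_pword_mul_eq haf ▸ leJ_mul_left _ _
  have hbP : leJ (η (pword b)) f := mul_eta_pword_eq hfb ▸ leJ_mul_right _ _
  refine ⟨⟨fun _ => ⟨fun g hg => hblocks g (by simp [join, hg]), hblocks (a.2, f) (by simp [join])⟩,
      fun g hg => transfer (hP ▸ leJ_mul_right _ _) haP g (by simp [join, hg]), hja⟩,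
    ⟨fun _ => ⟨fun g hg => hblocks g (by simp [join, hg]), hlast⟩,
      fun g hg => transfer (hP ▸ leJ_mul_left _ _) hbP g (by simp [join, hg]), hjb⟩⟩

theorem InQ.of_join {a b : Pattern A N} {f : N} (h : InQ η α k (join a f b)) :
    InQ η α k a ∧ InQ η α k b := by
  obtain ⟨hpat, hguard, hblocks, hlast⟩ := h
  obtain ⟨hpa, hpb⟩ := hpat.of_join
  obtain ⟨hga, -, hgb⟩ := (allJunctions_join (P := IsGuard η α)).1 hguard
  exact ⟨⟨hpa, hga, fun g hg => hblocks g (by simp [join, hg]), hblocks (a.2, f) (by simp [join])⟩,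
    ⟨hpb, hgb, fun g hg => hblocks g (by simp [join, hg]), hlast⟩⟩

/-- An inserted pattern `c` whose word does not move the prefix `a` in front of it is forced to
have `η`-image `e`: this is where the `J`-class condition on the idempotents is used. -/
theorem IsPattern.eta_pword_eq_of_join_join [Finite N] {a c t : Pattern A N} {e : N}
    (h : IsPattern η (join a e (join c e t))) (hloop : η (pword a) * η (pword c) = η (pword a)) :
    η (pword c) = e := by
  obtain ⟨-, ⟨hae, hec⟩, -⟩ := (allJunctions_join (P := IsJunction η)).1 h.2.2
  rw [show (join c e t).1 = c.1 ++ (c.2, e) :: t.1 from rfl, headWord_append_cons] at hec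
  have hJ : leJ e (η (pword a)) :=
    leJ_trans (h.2.1 (a.2, e) (by simp [join])).2.1
      (by rw [pword_join, map_mul]; exact leJ_mul_right _ _)
  exact eq_of_leJ_of_mul_eq hJ (eta_pword_mul_eq hae) hloop (mul_eta_pword_eq hec)

end Segments

section Insertion

variable {A M N : Type*} [Monoid M] [Monoid N] (η : FreeMonoid A →* N)
  (α : FreeMonoid A →* M) (k : ℕ)

theorem prec_refl {t : Pattern A N} (h : InQ η α k t) : Prec η α k t t :=
  ⟨[], t, h, by simp, rfl, rfl⟩

variable {η α k}

theorem Prec.join_insert {t₁ t₂ r c : Pattern A N} {e : N} (h : Prec η α k t₁ t₂)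
    (hr : InQ η α k r) (hc : InQ η α k c) (he : IsIdempotentElem e) (hce : η (pword c) = e) :
    Prec η α k (join r e t₁) (join r e (join c e t₂)) := by
  obtain ⟨B, pl, hpl, hB, rfl, rfl⟩ := h
  exact ⟨(r, e, c) :: B, pl, hpl, List.forall_mem_cons.2 ⟨⟨hr, hc, he, hce⟩, hB⟩, rfl, rfl⟩

theorem Prec.join_left {t₁ t₂ r : Pattern A N} {e : N} (h : Prec η α k t₁ t₂)
    (hr : InQ η α k (join r e t₁)) : Prec η α k (join r e t₁) (join r e t₂) := by
  obtain ⟨B, pl, hpl, hB, rfl, rfl⟩ := h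
  cases B with
  | nil => exact prec_refl η α k hr
  | cons b B =>
    obtain ⟨p, g, c⟩ := b
    simp only [List.foldr_cons] at hr ⊢
    rw [join_join] at hr
    rw [join_join, join_join]
    refine ⟨(join r e p, g, c) :: B, pl, hpl, ?_, rfl, rfl⟩
    exact List.forall_mem_cons.2 ⟨⟨hr.of_join.1, (hB _ List.mem_cons_self).2⟩,
      fun b hb => hB b (List.mem_cons_of_mem _ hb)⟩

end Insertion

section Automaton

open scoped List

variable {A M N : Type*} [Monoid M] [Monoid N] (η : FreeMonoid A →* N)
  (α : FreeMonoid A →* M) (k : ℕ)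

def step (s : N × Option N) (b : FreeMonoid A × N) : N × Option N :=
  (s.1 * η b.1, some b.2)

theorem foldl_step_fst (c : List (FreeMonoid A × N)) (s : N × Option N) :
    (c.foldl (step η) s).1 = s.1 * η (c.map Prod.fst).prod := by
  induction c generalizing s with
  | nil => simp
  | cons b c ih => simp [ih, step, mul_assoc]

theorem eq_nil_of_foldl_step_eq {c : List (FreeMonoid A × N)} {s : N × Option N} {ρ : N}
    (h : c.foldl (step η) s = (ρ, none)) : c = [] := by
  rcases c.eq_nil_or_concat' with rfl | ⟨c, b, rfl⟩
  · rfl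
  · simp [step] at h

theorem eq_nil_or_of_foldl_step_eq {c : List (FreeMonoid A × N)} {ρ e : N}
    (h : c.foldl (step η) (ρ, some e) = (ρ, some e)) :
    c = [] ∨ ∃ c' x, c = c' ++ [(x, e)] ∧ ρ * η (pword (c', x)) = ρ := by
  rcases c.eq_nil_or_concat' with rfl | ⟨c', ⟨x, f⟩, rfl⟩
  · exact Or.inl rfl
  · have hρ := congrArg Prod.fst h
    rw [foldl_step_fst] at hρ
    obtain rfl : f = e := by simpa [step] using congrArg Prod.snd h
    exact Or.inr ⟨c', x, rfl, by simpa [pword, ← mul_assoc] using hρ⟩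

abbrev Letter (A N : Type*) := ((FreeMonoid A × N) ⊕ FreeMonoid A) × (N × Option N)

def encode : N × Option N → List (FreeMonoid A × N) → FreeMonoid A → List (Letter A N)
  | s, [], w => [(.inr w, s)]
  | s, b :: l, w => (.inl b, s) :: encode (step η s b) l w

theorem exists_of_encode_cons_sublist {s s' : N × Option N} {b : FreeMonoid A × N}
    {l₁ l₂ : List (FreeMonoid A × N)} {w₁ w₂ : FreeMonoid A}
    (h : encode η s (b :: l₁) w₁ <+ encode η s' l₂ w₂) :
    ∃ c l₂', l₂ = c ++ b :: l₂' ∧ c.foldl (step η) s' = s ∧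
      encode η (step η s b) l₁ w₁ <+ encode η (step η s b) l₂' w₂ := by
  induction l₂ generalizing s' with
  | nil => simp [encode] at h
  | cons b' l₂ ih =>
    rcases List.sublist_cons_iff.1 h with h | ⟨r, hr, hsub⟩
    · obtain ⟨c, l₂', rfl, hc, hsub⟩ := ih h
      exact ⟨b' :: c, l₂', rfl, hc, hsub⟩
    · simp only [encode, List.cons.injEq, Prod.mk.injEq, Sum.inl.injEq] at hr
      obtain ⟨⟨rfl, rfl⟩, rfl⟩ := hr
      exact ⟨[], l₂, rfl, rfl, hsub⟩

theorem of_encode_nil_sublist {s s' : N × Option N} {l₂ : List (FreeMonoid A × N)}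
    {w₁ w₂ : FreeMonoid A} (h : encode η s [] w₁ <+ encode η s' l₂ w₂) :
    w₁ = w₂ ∧ l₂.foldl (step η) s' = s := by
  induction l₂ generalizing s' with
  | nil => simpa [encode, eq_comm] using h
  | cons b' l₂ ih =>
    rcases List.sublist_cons_iff.1 h with h | ⟨r, hr, -⟩
    · exact ih h
    · simp [encode] at hr

/-- `InsertsLoops s l₁ l₂`: `l₂` arises from `l₁` by inserting, right after each block, a list
of blocks along which `step` returns to the state it started from. -/
inductive InsertsLoops : N × Option N → List (FreeMonoid A × N) → List (FreeMonoid A × N) → Prop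
  | nil (s : N × Option N) : InsertsLoops s [] []
  | cons {s : N × Option N} {b : FreeMonoid A × N} {l₁ l₂ : List (FreeMonoid A × N)}
      (c : List (FreeMonoid A × N)) :
      c.foldl (step η) (step η s b) = step η s b → InsertsLoops (step η s b) l₁ l₂ →
      InsertsLoops s (b :: l₁) (b :: (c ++ l₂))

theorem insertsLoops_of_encode_sublist {s s' : N × Option N} {l₁ l₂ : List (FreeMonoid A × N)}
    {w₁ w₂ : FreeMonoid A} (h : encode η s l₁ w₁ <+ encode η s' l₂ w₂) :
    w₁ = w₂ ∧ ∃ c l₂', l₂ = c ++ l₂' ∧ c.foldl (step η) s' = s ∧ InsertsLoops η s l₁ l₂' := by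
  induction l₁ generalizing s s' l₂ with
  | nil =>
    obtain ⟨hw, hloop⟩ := of_encode_nil_sublist η h
    exact ⟨hw, l₂, [], by simp, hloop, .nil s⟩
  | cons b l₁ ih =>
    obtain ⟨c, l₂', rfl, hc, hsub⟩ := exists_of_encode_cons_sublist η h
    obtain ⟨hw, c', l₂'', rfl, hc', hins⟩ := ih hsub
    exact ⟨hw, c, b :: (c' ++ l₂''), rfl, hc, .cons c' hc' hins⟩

variable {η α k}

theorem InsertsLoops.prec [Finite N] {s : N × Option N} {l₁ l₂ : List (FreeMonoid A × N)}
    (h : InsertsLoops η s l₁ l₂) {X : List (FreeMonoid A × N)} {w : FreeMonoid A}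
    (hs : s.1 = η (X.map Prod.fst).prod) (hq : InQ η α k (X ++ l₂, w))
    (hp : InQ η α k (l₁, w)) : Prec η α k (l₁, w) (l₂, w) := by
  induction h generalizing X with
  | nil => exact prec_refl η α k hp
  | @cons s b l₁ l₂ c hloop _ ih =>
    obtain ⟨u, e⟩ := b
    have hstep : step η s (u, e) = (η (pword (X, u)), some e) := by simp [step, pword, hs]
    rw [hstep] at hloop ih
    have hρc : η (pword (X, u)) * η (c.map Prod.fst).prod = η (pword (X, u)) := by
      simpa [foldl_step_fst] using congrArg Prod.fst hloop
    have hp' : InQ η α k (join ([], u) e (l₁, w)) := hp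
    have htail := ih (X := X ++ (u, e) :: c)
      (by rw [show ((X ++ (u, e) :: c).map Prod.fst).prod = pword (X, u) * (c.map Prod.fst).prod
          by simp [pword, mul_assoc], map_mul, hρc])
      (by simpa using hq) hp'.of_join.2
    rcases eq_nil_or_of_foldl_step_eq η hloop with rfl | ⟨c', x, rfl, hcx⟩
    · exact htail.join_left hp'
    · have hq' : InQ η α k (join (X, u) e (join (c', x) e (l₂, w))) := by
        simpa [join] using hq
      simpa [join] using htail.join_insert hp'.of_join.1 hq'.of_join.2.of_join.1
        hp'.1.isIdempotentElem_of_join (hq'.1.eta_pword_eq_of_join_join hcx)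

theorem prec_of_encode_sublist [Finite N] {p q : Pattern A N} (hp : InQ η α k p)
    (hq : InQ η α k q) (h : encode η (1, none) p.1 p.2 <+ encode η (1, none) q.1 q.2) :
    Prec η α k p q := by
  obtain ⟨hw, c, l₂, hq₁, hc, hins⟩ := insertsLoops_of_encode_sublist η h
  obtain rfl := eq_nil_of_foldl_step_eq η hc
  obtain ⟨l₁, w⟩ := p
  obtain ⟨_, w'⟩ := q
  obtain rfl : w = w' := hw
  obtain rfl := List.nil_append l₂ ▸ hq₁
  exact hins.prec (X := []) (by simp) hq hp

end Automaton

section Finiteness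

variable {A N : Type*}

def letterWord (x : Letter A N) : FreeMonoid A := Sum.elim Prod.fst id x.1

theorem letterWord_length_le_of_mem_encode [Monoid N] (η : FreeMonoid A →* N) {n : ℕ}
    {l : List (FreeMonoid A × N)} {w : FreeMonoid A}
    (hl : ∀ b ∈ l, (FreeMonoid.toList b.1).length ≤ n) (hw : (FreeMonoid.toList w).length ≤ n)
    {s : N × Option N} {x : Letter A N} (hx : x ∈ encode η s l w) :
    (FreeMonoid.toList (letterWord x)).length ≤ n := by
  induction l generalizing s with
  | nil =>
    obtain rfl := List.mem_singleton.1 hx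
    exact hw
  | cons b l ih =>
    rcases List.mem_cons.1 hx with rfl | hx
    · exact hl b List.mem_cons_self
    · exact ih (fun b hb => hl b (List.mem_cons_of_mem _ hb)) hx

theorem finite_setOf_letterWord_length_le [Finite A] [Finite N] (n : ℕ) :
    {x : Letter A N | (FreeMonoid.toList (letterWord x)).length ≤ n}.Finite := by
  have hW : {w : FreeMonoid A | (FreeMonoid.toList w).length ≤ n}.Finite :=
    List.finite_length_le A n
  refine ((((hW.prod Set.finite_univ).image Sum.inl).union (hW.image Sum.inr)).prod
    Set.finite_univ).subset ?_
  rintro ⟨⟨b, f⟩ | w, s⟩ hx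
  · exact ⟨Or.inl ⟨(b, f), ⟨hx, trivial⟩, rfl⟩, trivial⟩
  · exact ⟨Or.inr ⟨w, hx, rfl⟩, trivial⟩

end Finiteness

theorem stmt_16_general {A M N : Type*} [Fintype A] [Monoid M]
    [Monoid N] [Fintype N]
    (η : FreeMonoid A →* N) (α : FreeMonoid A →* M) (k : ℕ)
    (f : ℕ → Pattern A N) (hf : ∀ i, InQ η α k (f i)) :
    ∃ i j : ℕ, i < j ∧ Prec η α k (f i) (f j) := by
  have hletters :=
    (finite_setOf_letterWord_length_le (A := A) (N := N) (2 * k)).partiallyWellOrderedOn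
      (r := (· = ·))
  obtain ⟨m, n, hmn, hsub⟩ := (hletters.partiallyWellOrderedOn_sublistForall₂ (· = ·)).exists_lt
    (f := fun i => encode η (1, none) (f i).1 (f i).2)
    (fun i _ hx => letterWord_length_le_of_mem_encode η (hf i).2.2.1 (hf i).2.2.2 hx)
  obtain ⟨l, hl, hsub⟩ := List.sublistForall₂_iff.1 hsub
  rw [List.forall₂_eq_eq_eq] at hl
  subst hl
  exact ⟨m, n, hmn, prec_of_encode_sublist (hf m) (hf n) hsub⟩

/-- Lemma `polcov:wellorder`: `⪯` is a well-quasi-order on `Q`: every infinite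
sequence of patterns in `Q` contains indices `i < j` with `p̄ᵢ ⪯ p̄ⱼ`. -/
theorem stmt_16 {A M N : Type*} [Fintype A] [Monoid M] [Fintype M]
    [Monoid N] [Fintype N]
    (η : FreeMonoid A →* N) (α : FreeMonoid A →* M) (k : ℕ)
    (f : ℕ → Pattern A N) (hf : ∀ i, InQ η α k (f i)) :
    ∃ i j : ℕ, i < j ∧ Prec η α k (f i) (f j) :=
  stmt_16_general η α k f hf

end Stmt16
end

section
/- Splitting words in preimages of a J-class: let η : A* → N be a morphism into a finite monoid, α : A* → M another morphism into a finite monoid, J a J-class of N that is η-alphabetic (for every letter a ∈ A, if J ≤_J η(a) then η(a) ∈ J), and let w ∈ η⁻¹(J) with |w| > k where k = 1 + |M × N|². Then there exist a decomposition w = w' x y with w' ∈ A⁺, |x| ≤ k, |y| ≤ k, η(w') ∈ J, and an idempotent (g,e) ∈ E(M × N) such that (α(x),η(x))·(g,e) = (α(x),η(x)) and (g,e)·(α(y),η(y)) = (α(y),η(y)), with (g,e) of the form (γ(z))^ω for some nonempty factor z of the final k letters of w (so in particular η⁻¹(e) ∩ α⁻¹(g) ≠ ∅). -/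
private lemma absorb_right_pow {S : Type*} [Monoid S] {a b : S} (h : a * b = a) (m : ℕ) :
    a * b ^ m = a := by
  induction m with
  | zero => simp
  | succ n ih => rw [pow_succ, ← mul_assoc, ih, h]

private lemma absorb_left_pow {S : Type*} [Monoid S] {a b : S} (h : b * a = a) (m : ℕ) :
    b ^ m * a = a := by
  induction m with
  | zero => simp
  | succ n ih => rw [pow_succ, mul_assoc, h, ih]

private lemma exists_idem_pow_s17 {S : Type*} [Monoid S] [Finite S] (a : S) :
    ∃ m : ℕ, 0 < m ∧ IsIdempotentElem (a ^ m) := by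
  obtain ⟨i, j, hne, hij⟩ := Finite.exists_ne_map_eq_of_infinite (fun n : ℕ => a ^ n)
  wlog hlt : i < j generalizing i j
  · exact this j i hne.symm hij.symm (by omega)
  have hij' : a ^ i = a ^ j := hij
  set d := j - i with hd
  have hd0 : 0 < d := by omega
  have hstep : ∀ n, i ≤ n → a ^ (n + d) = a ^ n := by
    intro n hn
    have h1 : a ^ (n + d) = a ^ (n - i) * a ^ j := by rw [← pow_add]; congr 1; omega
    have h2 : a ^ n = a ^ (n - i) * a ^ i := by rw [← pow_add]; congr 1; omega
    rw [h1, h2, hij']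
  have hmult : ∀ t n, i ≤ n → a ^ (n + t * d) = a ^ n := by
    intro t
    induction t with
    | zero => simp
    | succ s ih =>
      intro n hn
      have h3 : n + (s + 1) * d = (n + s * d) + d := by ring
      rw [h3, hstep _ (by omega), ih n hn]
  have hge : i ≤ (i + 1) * d := by nlinarith
  refine ⟨(i + 1) * d, by positivity, ?_⟩
  show a ^ ((i + 1) * d) * a ^ ((i + 1) * d) = a ^ ((i + 1) * d)
  rw [← pow_add]
  exact hmult (i + 1) _ hge

/-- Inductive step of Lemma `wformed`: let `η : A* → N`, `α : A* → M` be
morphisms into finite monoids, `J` an `η`-alphabetic `J`-class of `N`, and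
`w ∈ η⁻¹(J)` of length `> k` where `k = 1 + |M × N|²`. Then `w = w' x y` with
`w'` nonempty, `|x| ≤ k`, `|y| ≤ k`, `η(w') ∈ J`, and there is an idempotent
`(g, e) ∈ E(M × N)`, of the form `(γ(z))^ω` for a nonempty factor `z` of the
last `k` letters of `w`, absorbed on the right of `(α x, η x)` and on the left
of `(α y, η y)`; in particular `η⁻¹(e) ∩ α⁻¹(g) ≠ ∅`. -/
theorem stmt_17 {A : Type*} [Fintype A] {M N : Type*}
    [Monoid M] [Fintype M] [Monoid N] [Fintype N]
    (η : FreeMonoid A →* N) (α : FreeMonoid A →* M)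
    (J : Set N) (n₀ : N)
    (hJ : J = {x : N | (∃ u v : N, x = u * n₀ * v) ∧ (∃ u v : N, n₀ = u * x * v)})
    (halph : ∀ a : A, ∀ j ∈ J,
      (∃ u v : N, j = u * η (FreeMonoid.of a) * v) → η (FreeMonoid.of a) ∈ J)
    (w : FreeMonoid A) (hw : η w ∈ J)
    (k : ℕ) (hk : k = 1 + (Fintype.card (M × N)) ^ 2)
    (hlen : k < (FreeMonoid.toList w).length) :
    ∃ w' x y : FreeMonoid A, w = w' * x * y ∧ w' ≠ 1 ∧
      (FreeMonoid.toList x).length ≤ k ∧ (FreeMonoid.toList y).length ≤ k ∧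
      η w' ∈ J ∧
      ∃ (g : M) (e : N),
        IsIdempotentElem ((g, e) : M × N) ∧
        α x * g = α x ∧ η x * e = η x ∧
        g * α y = α y ∧ e * η y = η y ∧
        (∃ z : FreeMonoid A, z ≠ 1 ∧
          (FreeMonoid.toList z) <:+:
            ((FreeMonoid.toList w).drop ((FreeMonoid.toList w).length - k)) ∧
          ∃ m : ℕ, 0 < m ∧ IsIdempotentElem (((α z, η z) : M × N) ^ m) ∧
            ((g, e) : M × N) = ((α z, η z) : M × N) ^ m) ∧
        (∃ u : FreeMonoid A, η u = e ∧ α u = g) := by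
  classical
  set γ : FreeMonoid A →* M × N := α.prod η with hγ
  set L : List A := FreeMonoid.toList w with hL
  set n : ℕ := L.length with hn
  set p : List A := L.take (n - k) with hp
  set s : List A := L.drop (n - k) with hs
  have hslen : s.length = k := by rw [hs, List.length_drop]; omega
  clear_value s p n L
  -- pigeonhole on prefix/suffix pairs of s
  have hcard : Fintype.card ((M × N) × (M × N)) < Fintype.card (Fin (k + 1)) := by
    rw [Fintype.card_prod, Fintype.card_fin]
    have : Fintype.card (M × N) ^ 2 = Fintype.card (M × N) * Fintype.card (M × N) := sq _
    omega
  obtain ⟨i, j, hij, hjk, ht, hdd⟩ : ∃ i j : ℕ, i < j ∧ j ≤ k ∧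
      γ (FreeMonoid.ofList (s.take i)) = γ (FreeMonoid.ofList (s.take j)) ∧
      γ (FreeMonoid.ofList (s.drop i)) = γ (FreeMonoid.ofList (s.drop j)) := by
    obtain ⟨a, b, hab, hfab⟩ := Fintype.exists_ne_map_eq_of_card_lt
      (fun t : Fin (k + 1) =>
        ((γ (FreeMonoid.ofList (s.take t.val)), γ (FreeMonoid.ofList (s.drop t.val))) :
          (M × N) × (M × N))) hcard
    simp only [Prod.mk.injEq] at hfab
    rcases Nat.lt_trichotomy a.val b.val with h | h | h
    · exact ⟨a.val, b.val, h, Nat.lt_succ_iff.mp b.isLt, hfab.1, hfab.2⟩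
    · exact absurd (Fin.ext h) hab
    · exact ⟨b.val, a.val, h, Nat.lt_succ_iff.mp a.isLt, hfab.1.symm, hfab.2.symm⟩
  -- list splittings
  have hsplit1 : s.take j = s.take i ++ (s.drop i).take (j - i) := by
    have h1 : j = i + (j - i) := by omega
    conv_lhs => rw [h1]
    rw [List.take_add]
  have hsplit2 : s.drop i = (s.drop i).take (j - i) ++ s.drop j := by
    conv_lhs => rw [← List.take_append_drop (j - i) (s.drop i)]
    rw [List.drop_drop]
    have h2 : i + (j - i) = j := by omega
    rw [h2]
  -- absorption facts
  have hxq : γ (FreeMonoid.ofList (s.take j)) =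
      γ (FreeMonoid.ofList (s.take i)) * γ (FreeMonoid.ofList ((s.drop i).take (j - i))) := by
    rw [hsplit1, FreeMonoid.ofList_append, map_mul]
  have hyq : γ (FreeMonoid.ofList (s.drop i)) =
      γ (FreeMonoid.ofList ((s.drop i).take (j - i))) * γ (FreeMonoid.ofList (s.drop j)) := by
    conv_lhs => rw [hsplit2]
    rw [FreeMonoid.ofList_append, map_mul]
  have habs0 : γ (FreeMonoid.ofList (s.take i)) * γ (FreeMonoid.ofList ((s.drop i).take (j - i)))
      = γ (FreeMonoid.ofList (s.take i)) := hxq.symm.trans ht.symm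
  have hxabs : γ (FreeMonoid.ofList (s.take j)) * γ (FreeMonoid.ofList ((s.drop i).take (j - i)))
      = γ (FreeMonoid.ofList (s.take j)) := by
    rw [← ht]; exact habs0
  have hyabs : γ (FreeMonoid.ofList ((s.drop i).take (j - i))) * γ (FreeMonoid.ofList (s.drop j))
      = γ (FreeMonoid.ofList (s.drop j)) := hyq.symm.trans hdd
  -- idempotent power
  obtain ⟨m, hm0, hmid⟩ := exists_idem_pow_s17 (γ (FreeMonoid.ofList ((s.drop i).take (j - i))))
  have hxm := absorb_right_pow hxabs m
  have hym := absorb_left_pow hyabs m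
  -- w = w' * x * y
  have hwdec : w = FreeMonoid.ofList p * FreeMonoid.ofList (s.take j)
      * FreeMonoid.ofList (s.drop j) := by
    rw [← FreeMonoid.ofList_append, ← FreeMonoid.ofList_append, List.append_assoc,
      List.take_append_drop, hp, hs, List.take_append_drop, hL, FreeMonoid.ofList_toList]
  -- w' nonempty
  have hplen : p.length = n - k := by rw [hp, List.length_take]; omega
  have hpne : p ≠ [] := by
    intro h; rw [h] at hplen; simp at hplen; omega
  have hw'ne : FreeMonoid.ofList p ≠ 1 := by
    intro h
    exact hpne (by simpa using congrArg FreeMonoid.toList h)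
  -- η w' ∈ J
  have hn₀J : n₀ ∈ J := by rw [hJ]; exact ⟨⟨1, 1, by simp⟩, ⟨1, 1, by simp⟩⟩
  obtain ⟨a₀, p', hpcons⟩ := List.exists_cons_of_ne_nil hpne
  have hw'cons : FreeMonoid.ofList p = FreeMonoid.of a₀ * FreeMonoid.ofList p' := by
    rw [hpcons, FreeMonoid.ofList_cons]
  rw [hJ] at hw
  obtain ⟨-, u₂, v₂, h₂⟩ := hw
  have hwsplit : η w = η (FreeMonoid.of a₀) *
      (η (FreeMonoid.ofList p') * (η (FreeMonoid.ofList (s.take j)) *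
        η (FreeMonoid.ofList (s.drop j)))) := by
    rw [hwdec, hw'cons]
    simp only [map_mul, mul_assoc]
  have hηa : η (FreeMonoid.of a₀) ∈ J := by
    refine halph a₀ n₀ hn₀J ⟨u₂, η (FreeMonoid.ofList p') * (η (FreeMonoid.ofList (s.take j)) *
        η (FreeMonoid.ofList (s.drop j))) * v₂, ?_⟩
    rw [h₂, hwsplit]
    simp only [mul_assoc]
  rw [hJ] at hηa
  obtain ⟨⟨u₃, v₃, h₃⟩, -⟩ := hηa
  have hw'J : η (FreeMonoid.ofList p) ∈ J := by
    rw [hJ]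
    constructor
    · refine ⟨u₃, v₃ * η (FreeMonoid.ofList p'), ?_⟩
      rw [hw'cons, map_mul, h₃]
      simp only [mul_assoc]
    · refine ⟨u₂, η (FreeMonoid.ofList (s.take j)) * η (FreeMonoid.ofList (s.drop j)) * v₂, ?_⟩
      rw [h₂, hwdec]
      simp only [map_mul, mul_assoc]
  -- z nonempty and infix
  have hzllen : ((s.drop i).take (j - i)).length = j - i := by
    rw [List.length_take, List.length_drop, hslen]
    omega
  have hzlne : (s.drop i).take (j - i) ≠ [] := by
    intro h; rw [h] at hzllen; simp at hzllen; omega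
  have hzne : FreeMonoid.ofList ((s.drop i).take (j - i)) ≠ 1 := by
    intro h
    exact hzlne (by simpa using congrArg FreeMonoid.toList h)
  have hinfix : FreeMonoid.toList (FreeMonoid.ofList ((s.drop i).take (j - i))) <:+: s := by
    refine ⟨s.take i, s.drop j, ?_⟩
    rw [FreeMonoid.toList_ofList, ← hsplit1, List.take_append_drop]
  -- lengths of x and y
  have hxlen : (FreeMonoid.toList (FreeMonoid.ofList (s.take j))).length ≤ k := by
    simp only [FreeMonoid.toList_ofList, List.length_take]
    omega
  have hylen : (FreeMonoid.toList (FreeMonoid.ofList (s.drop j))).length ≤ k := by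
    simp only [FreeMonoid.toList_ofList, List.length_drop]
    omega
  -- assemble
  refine ⟨FreeMonoid.ofList p, FreeMonoid.ofList (s.take j), FreeMonoid.ofList (s.drop j),
    hwdec, hw'ne, hxlen, hylen, hw'J,
    (γ (FreeMonoid.ofList ((s.drop i).take (j - i))) ^ m).1,
    (γ (FreeMonoid.ofList ((s.drop i).take (j - i))) ^ m).2,
    ?_, ?_, ?_, ?_, ?_, ?_, ?_⟩
  · have heta : ((γ (FreeMonoid.ofList ((s.drop i).take (j - i))) ^ m).1,
        (γ (FreeMonoid.ofList ((s.drop i).take (j - i))) ^ m).2)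
        = γ (FreeMonoid.ofList ((s.drop i).take (j - i))) ^ m := rfl
    rw [heta]; exact hmid
  · simpa [hγ, Prod.fst_mul] using congrArg Prod.fst hxm
  · simpa [hγ, Prod.snd_mul] using congrArg Prod.snd hxm
  · simpa [hγ, Prod.fst_mul] using congrArg Prod.fst hym
  · simpa [hγ, Prod.snd_mul] using congrArg Prod.snd hym
  · refine ⟨FreeMonoid.ofList ((s.drop i).take (j - i)), hzne, hinfix, m, hm0, ?_, ?_⟩
    · exact hmid
    · rfl
  · refine ⟨(FreeMonoid.ofList ((s.drop i).take (j - i))) ^ m, ?_, ?_⟩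
    · rw [map_pow]; rfl
    · rw [map_pow]; rfl
end
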